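/- arXiv:2303.03116 — 5 statements merged into one kernel-verified Lean document; each statement's English description precedes it below -/
import Mathlib

section
/- Given α ∈ (1,4] and λ2 > 0, there exists λ1 > 0 satisfying 1 < λ1/√(8(λ2+1)) < ((α+1)λ2 + α − 1)/(2√α(λ2+1)) if and only if λ2 > (1 + 2√α − α)/(1 − 2√α + α). -/
theorem stmt_1 (α lam2 : ℝ) (hα1 : 1 < α) (hα4 : α ≤ 4) (hlam2 : 0 < lam2) :
    (∃ lam1 : ℝ, 0 < lam1 ∧
        1 < lam1 / Real.sqrt (8 * (lam2 + 1)) ∧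
        lam1 / Real.sqrt (8 * (lam2 + 1)) <
          ((α + 1) * lam2 + α - 1) / (2 * Real.sqrt α * (lam2 + 1))) ↔
    lam2 > (1 + 2 * Real.sqrt α - α) / (1 - 2 * Real.sqrt α + α) := by
  set s := Real.sqrt α with hs
  have hα0 : 0 < α := by linarith
  have hs2 : s ^ 2 = α := Real.sq_sqrt hα0.le
  have hsnn := Real.sqrt_nonneg α
  have hs1 : 1 < s := by nlinarith
  have hD : 0 < Real.sqrt (8 * (lam2 + 1)) := Real.sqrt_pos.mpr (by linarith)
  have hden : 0 < 1 - 2 * s + α := by nlinarith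
  have hB : (1 < ((α + 1) * lam2 + α - 1) / (2 * s * (lam2 + 1))) ↔
      lam2 > (1 + 2 * s - α) / (1 - 2 * s + α) := by
    rw [lt_div_iff₀ (by nlinarith), gt_iff_lt, div_lt_iff₀ hden]
    constructor <;> intro h <;> nlinarith
  constructor
  · rintro ⟨lam1, hl0, h1, h2⟩
    exact hB.mp (lt_trans h1 h2)
  · intro h
    have hB' := hB.mpr h
    set B := ((α + 1) * lam2 + α - 1) / (2 * s * (lam2 + 1)) with hBdef
    refine ⟨Real.sqrt (8 * (lam2 + 1)) * ((1 + B) / 2),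
      mul_pos hD (by linarith), ?_, ?_⟩ <;>
      rw [mul_div_cancel_left₀ _ hD.ne'] <;> linarith
end

section
/- The function V: ℝ² → ℝ defined by V(x) = W(x) if x2 ≥ 0 and V(x) = W(−x) if x2 < 0, where W is the piecewise function built from W1, W2, W3, is nonnegative everywhere and vanishes only at the origin (positive definiteness). -/
noncomputable def W (L lam2 α : ℝ) (x1 x2 : ℝ) : ℝ :=
  if x1 ≤ x2 ^ 2 / (4 * α * (lam2 + 1) * L) then
    x2 ^ 2 / (2 * α * (lam2 + 1) * L) - x1
  else if x1 ≤ (2 * α + 1) * x2 ^ 2 / (4 * α * (lam2 + 1) * L) then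
    x2 ^ 2 / (4 * α * (lam2 + 1) * L)
  else x1 - x2 ^ 2 / (2 * (lam2 + 1) * L)

noncomputable def V (L lam2 α : ℝ) (x1 x2 : ℝ) : ℝ :=
  if 0 ≤ x2 then W L lam2 α x1 x2 else W L lam2 α (-x1) (-x2)

/-! With `t = x2² / (4α(λ2+1)L) ≥ 0` the three pieces of `W` are `2t - x1 ≥ t`, `t` and
`x1 - 2αt > t`, so `W ≥ t ≥ 0`. If `W = 0` then `t = 0`, which empties the middle piece, forces
`x1 = 0` on the first and is impossible on the last. `V` inherits both facts through `x ↦ -x`. -/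

/-- `W` written in `x1` and `t = x2² / (4α(λ2+1)L)`, with slope `c = 2α` on the last piece. -/
noncomputable def threePiece (c t x : ℝ) : ℝ :=
  if x ≤ t then 2 * t - x else if x ≤ (c + 1) * t then t else x - c * t

section threePiece

variable (c : ℝ) {t : ℝ}

theorem threePiece_nonneg (ht : 0 ≤ t) (x : ℝ) : 0 ≤ threePiece c t x := by
  unfold threePiece
  split_ifs <;> linarith

theorem threePiece_eq_zero_iff (ht : 0 ≤ t) (x : ℝ) : threePiece c t x = 0 ↔ x = 0 ∧ t = 0 := by
  unfold threePiece
  split_ifs with h₁ h₂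
  · constructor
    · intro h
      constructor <;> linarith
    · rintro ⟨rfl, rfl⟩
      norm_num
  · constructor
    · rintro rfl
      linarith
    · rintro ⟨rfl, rfl⟩
      rfl
  · constructor
    · intro h
      linarith
    · rintro ⟨rfl, rfl⟩
      simp at h₁

end threePiece

section W

variable {L lam2 α : ℝ}

theorem W_eq_threePiece (hL : L ≠ 0) (hlam2 : lam2 + 1 ≠ 0) (hα : α ≠ 0) (x1 x2 : ℝ) :
    W L lam2 α x1 x2 = threePiece (2 * α) (x2 ^ 2 / (4 * α * (lam2 + 1) * L)) x1 := by
  have h_first : x2 ^ 2 / (2 * α * (lam2 + 1) * L) = 2 * (x2 ^ 2 / (4 * α * (lam2 + 1) * L)) := by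
    field_simp; ring
  have h_last : x2 ^ 2 / (2 * (lam2 + 1) * L) = 2 * α * (x2 ^ 2 / (4 * α * (lam2 + 1) * L)) := by
    field_simp; ring
  rw [W, threePiece, h_first, h_last, mul_div_assoc]

variable (hL : 0 < L) (hlam2 : 0 < lam2) (hα : 0 < α) (x1 x2 : ℝ)
include hL hlam2 hα

theorem W_nonneg : 0 ≤ W L lam2 α x1 x2 := by
  rw [W_eq_threePiece hL.ne' (by linarith) hα.ne']
  exact threePiece_nonneg _ (by positivity) _

theorem W_eq_zero_iff : W L lam2 α x1 x2 = 0 ↔ x1 = 0 ∧ x2 = 0 := by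
  have hden : 0 < 4 * α * (lam2 + 1) * L := by positivity
  rw [W_eq_threePiece hL.ne' (by linarith) hα.ne', threePiece_eq_zero_iff _ (by positivity),
    div_eq_zero_iff, or_iff_left hden.ne', pow_eq_zero_iff two_ne_zero]

end W

theorem stmt_5_general (L lam2 α : ℝ) (hL : 0 < L) (hlam2 : 0 < lam2) (hα1 : 1 < α) :
    ∀ x1 x2 : ℝ, 0 ≤ V L lam2 α x1 x2 ∧ (V L lam2 α x1 x2 = 0 ↔ x1 = 0 ∧ x2 = 0) := by
  have hα : 0 < α := by linarith
  intro x1 x2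
  unfold V
  split_ifs
  · exact ⟨W_nonneg hL hlam2 hα x1 x2, W_eq_zero_iff hL hlam2 hα x1 x2⟩
  · refine ⟨W_nonneg hL hlam2 hα _ _, ?_⟩
    rw [W_eq_zero_iff hL hlam2 hα, neg_eq_zero, neg_eq_zero]

theorem stmt_5 (L lam2 α : ℝ) (hL : 0 < L) (hlam2 : 0 < lam2) (hα1 : 1 < α) (hα4 : α ≤ 4) :
    ∀ x1 x2 : ℝ, 0 ≤ V L lam2 α x1 x2 ∧ (V L lam2 α x1 x2 = 0 ↔ x1 = 0 ∧ x2 = 0) :=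
  stmt_5_general L lam2 α hL hlam2 hα1
end

section
/- Let N ≥ 0 and Ω = {x ∈ ℝ² : V(x) ≤ N}. Then the supremum of |x2| over Ω equals 2√(α(λ2+1)NL), and this supremum is attained. -/
lemma W_lower (L lam2 α : ℝ) (hL : 0 < L) (hlam2 : 0 < lam2) (hα1 : 1 < α)
    (x1 x2 : ℝ) : x2 ^ 2 / (4 * α * (lam2 + 1) * L) ≤ W L lam2 α x1 x2 := by
  have hα : 0 < α := lt_trans one_pos hα1
  have hlam : 0 < lam2 + 1 := by linarith
  have hA : 0 < 4 * α * (lam2 + 1) * L := by positivity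
  unfold W
  split_ifs with h1 h2
  · have : x2 ^ 2 / (2 * α * (lam2 + 1) * L) - x2 ^ 2 / (4 * α * (lam2 + 1) * L)
        = x2 ^ 2 / (4 * α * (lam2 + 1) * L) := by
      field_simp; ring
    nlinarith [this]
  · exact le_rfl
  · push_neg at h2
    have key : (2 * α + 1) * x2 ^ 2 / (4 * α * (lam2 + 1) * L)
        - x2 ^ 2 / (2 * (lam2 + 1) * L) = x2 ^ 2 / (4 * α * (lam2 + 1) * L) := by
      field_simp; ring
    nlinarith [key]

theorem stmt_7 (L lam2 α N : ℝ) (hL : 0 < L) (hlam2 : 0 < lam2) (hα1 : 1 < α) (hα4 : α ≤ 4)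
    (hN : 0 ≤ N) :
    IsGreatest ((fun x : ℝ × ℝ => |x.2|) '' {x : ℝ × ℝ | V L lam2 α x.1 x.2 ≤ N})
      (2 * Real.sqrt (α * (lam2 + 1) * N * L)) := by
  have hα : 0 < α := lt_trans one_pos hα1
  have hlam : 0 < lam2 + 1 := by linarith
  have hA : 0 < 4 * α * (lam2 + 1) * L := by positivity
  have hANL : 0 ≤ α * (lam2 + 1) * N * L := by positivity
  set s := Real.sqrt (α * (lam2 + 1) * N * L) with hs
  have hs0 : 0 ≤ s := Real.sqrt_nonneg _
  have hssq : s ^ 2 = α * (lam2 + 1) * N * L := Real.sq_sqrt hANL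
  constructor
  · -- membership: point (N, 2s)
    refine ⟨(N, 2 * s), ?_, ?_⟩
    · show V L lam2 α N (2 * s) ≤ N
      have h2s : (0:ℝ) ≤ 2 * s := by positivity
      have hsq : (2 * s) ^ 2 = 4 * (α * (lam2 + 1) * N * L) := by
        rw [mul_pow]; rw [hssq]; norm_num
      have hdiv : (2 * s) ^ 2 / (4 * α * (lam2 + 1) * L) = N := by
        rw [hsq]; field_simp
      have hdiv2 : (2 * s) ^ 2 / (2 * α * (lam2 + 1) * L) = 2 * N := by
        rw [hsq]; field_simp; ring
      rw [V, if_pos h2s, W, if_pos (le_of_eq hdiv.symm), hdiv2]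
      linarith
    · show |(2 * s)| = 2 * s
      exact abs_of_nonneg (by positivity)
  · -- upper bound
    rintro y ⟨⟨x1, x2⟩, hx, rfl⟩
    simp only [Set.mem_setOf_eq] at hx
    have hVlow : x2 ^ 2 / (4 * α * (lam2 + 1) * L) ≤ V L lam2 α x1 x2 := by
      rw [V]
      split_ifs with h
      · exact W_lower L lam2 α hL hlam2 hα1 x1 x2
      · have := W_lower L lam2 α hL hlam2 hα1 (-x1) (-x2)
        simpa using this
    have hx2sq : x2 ^ 2 ≤ 4 * (α * (lam2 + 1) * N * L) := by
      have : x2 ^ 2 / (4 * α * (lam2 + 1) * L) ≤ N := le_trans hVlow hx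
      rw [div_le_iff₀ hA] at this
      nlinarith
    have h2s : x2 ^ 2 ≤ (2 * s) ^ 2 := by
      rw [mul_pow, hssq]; nlinarith
    show |x2| ≤ 2 * s
    calc |x2| = Real.sqrt (x2 ^ 2) := (Real.sqrt_sq_eq_abs x2).symm
      _ ≤ Real.sqrt ((2 * s) ^ 2) := Real.sqrt_le_sqrt h2s
      _ = |2 * s| := Real.sqrt_sq_eq_abs _
      _ = 2 * s := abs_of_nonneg (by positivity)
end

section
/- Let v: [0,∞) → ℝ be a locally Lipschitz function, N ≥ 0 and γ > 0, and suppose that for almost every t with v(t) > N one has v'(t) ≤ −γ√(v(t) − N). Then for all t ≥ τ := 2√(max(v(0) − N, 0))/γ, one has v(t) ≤ N; moreover the set {v ≤ N} is forward invariant: if v(s) ≤ N then v(t) ≤ N for all t ≥ s. -/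
/-!
Above the level `N` the differential inequality makes `v` nonincreasing, so `v` cannot cross
from `{v ≤ N}` back above `N`. While `v > N`, the quantity `w = √(v - N)` satisfies
`w' = v' / (2 w) ≤ -γ / 2`, so `w` would reach zero before time `2 w(0) / γ`.
Both comparisons are integrations of an a.e. derivative bound, legitimate because locally
Lipschitz functions are absolutely continuous on compact intervals.
-/

open MeasureTheory Set Filter Topology

lemma LocallyLipschitzOn.comp {α β γ : Type*} [PseudoEMetricSpace α] [PseudoEMetricSpace β]
    [PseudoEMetricSpace γ] {g : β → γ} {f : α → β} {s : Set α} {t : Set β}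
    (hg : LocallyLipschitzOn t g) (hf : LocallyLipschitzOn s f) (hst : MapsTo f s t) :
    LocallyLipschitzOn s (g ∘ f) := by
  intro x hx
  obtain ⟨Kg, u, hu, hgu⟩ := hg (hst hx)
  obtain ⟨Kf, w, hw, hfw⟩ := hf hx
  have hpre : f ⁻¹' u ∈ 𝓝[s] x := (hf.continuousOn x hx).tendsto_nhdsWithin hst hu
  exact ⟨Kg * Kf, w ∩ f ⁻¹' u, inter_mem hw hpre,
    hgu.comp (hfw.mono inter_subset_left) fun _ hy ↦ hy.2⟩

lemma LocallyLipschitzOn.absolutelyContinuousOnInterval {f : ℝ → ℝ} {a b : ℝ}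
    (hf : LocallyLipschitzOn (uIcc a b) f) : AbsolutelyContinuousOnInterval f a b := by
  obtain ⟨K, hK⟩ := hf.exists_lipschitzOnWith_of_compact isCompact_uIcc
  exact hK.absolutelyContinuousOnInterval

lemma AbsolutelyContinuousOnInterval.sub_le_mul_of_ae_deriv_le {f : ℝ → ℝ} {a b C : ℝ}
    (hf : AbsolutelyContinuousOnInterval f a b) (hab : a ≤ b)
    (h : ∀ᵐ x ∂volume.restrict (Ioc a b), deriv f x ≤ C) : f b - f a ≤ C * (b - a) := by
  rw [← hf.integral_deriv_eq_sub, intervalIntegral.integral_of_le hab]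
  calc ∫ x in Ioc a b, deriv f x ≤ ∫ _ in Ioc a b, C :=
        setIntegral_mono_ae_restrict hf.intervalIntegrable_deriv.1
          (integrableOn_const measure_Ioc_lt_top.ne) h
    _ = C * (b - a) := by
        rw [setIntegral_const, measureReal_def, Real.volume_Ioc,
          ENNReal.toReal_ofReal (sub_nonneg.2 hab), smul_eq_mul, mul_comm]

lemma ContinuousOn.exists_le_forall_Ioc_lt {f : ℝ → ℝ} {s t N : ℝ}
    (hf : ContinuousOn f (Icc s t)) (hst : s ≤ t) (hs : f s ≤ N) :
    ∃ u ∈ Icc s t, f u ≤ N ∧ ∀ r ∈ Ioc u t, N < f r := by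
  have hcompact : IsCompact (Icc s t ∩ f ⁻¹' Iic N) :=
    isCompact_Icc.of_isClosed_subset (hf.preimage_isClosed_of_isClosed isClosed_Icc isClosed_Iic)
      inter_subset_left
  obtain ⟨u, ⟨hu, hfu⟩, hmax⟩ :=
    hcompact.exists_isGreatest ⟨s, ⟨left_mem_Icc.2 hst, hs⟩⟩
  refine ⟨u, hu, hfu, fun r hr ↦ lt_of_not_ge fun hfr ↦ ?_⟩
  exact hr.1.not_ge (hmax ⟨⟨hu.1.trans hr.1.le, hr.2⟩, hfr⟩)

lemma LocallyLipschitz.le_of_le_of_ae_deriv_nonpos {v : ℝ → ℝ} (hv : LocallyLipschitz v)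
    {N s t : ℝ} (hst : s ≤ t)
    (hder : ∀ᵐ r ∂volume.restrict (Ioc s t), N < v r → deriv v r ≤ 0)
    (hs : v s ≤ N) : v t ≤ N := by
  obtain ⟨u, hu, hvu, habove⟩ :=
    hv.continuous.continuousOn.exists_le_forall_Ioc_lt hst hs
  have hder' : ∀ᵐ r ∂volume.restrict (Ioc u t), deriv v r ≤ 0 := by
    filter_upwards [ae_restrict_of_ae_restrict_of_subset (Ioc_subset_Ioc_left hu.1) hder,
      ae_restrict_mem measurableSet_Ioc] with r hr hmem
    exact hr (habove r hmem)
  have := hv.locallyLipschitzOn.absolutelyContinuousOnInterval.sub_le_mul_of_ae_deriv_le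
    hu.2 hder'
  linarith

lemma deriv_sqrt_sub_le {v : ℝ → ℝ} {N γ r : ℝ} (hv : DifferentiableAt ℝ v r)
    (hr : N < v r) (hder : deriv v r ≤ -γ * √(v r - N)) :
    deriv (fun z ↦ √(v z - N)) r ≤ -(γ / 2) := by
  have hpos : 0 < √(v r - N) := Real.sqrt_pos.2 (sub_pos.2 hr)
  rw [((hv.hasDerivAt.sub_const N).sqrt (sub_pos.2 hr).ne').deriv, div_le_iff₀ (by positivity)]
  linarith

lemma locallyLipschitzOn_sqrt : LocallyLipschitzOn (Ioi 0) Real.sqrt :=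
  ContDiffOn.locallyLipschitzOn (convex_Ioi 0)
    fun _ hx ↦ (Real.contDiffAt_sqrt (ne_of_gt hx)).contDiffWithinAt

lemma LocallyLipschitz.locallyLipschitzOn_sqrt_sub {v : ℝ → ℝ} (hv : LocallyLipschitz v)
    {N : ℝ} {s : Set ℝ} (hs : ∀ r ∈ s, N < v r) :
    LocallyLipschitzOn s fun r ↦ √(v r - N) :=
  locallyLipschitzOn_sqrt.comp (hv.sub (LocallyLipschitz.const N)).locallyLipschitzOn
    fun r hr ↦ sub_pos.2 (hs r hr)

theorem stmt_15_general (v : ℝ → ℝ) (N γ : ℝ) (hγ : 0 < γ)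
    (hlip : LocallyLipschitz v)
    (hder : ∀ᵐ t ∂(volume.restrict (Set.Ici (0 : ℝ))),
      N < v t → deriv v t ≤ -γ * Real.sqrt (v t - N)) :
    (∀ t : ℝ, 2 * Real.sqrt (max (v 0 - N) 0) / γ ≤ t → v t ≤ N) ∧
    (∀ s t : ℝ, 0 ≤ s → s ≤ t → v s ≤ N → v t ≤ N) := by
  have hder_on : ∀ s t, 0 ≤ s → ∀ᵐ r ∂volume.restrict (Ioc s t),
      N < v r → deriv v r ≤ -γ * √(v r - N) := fun s t hs ↦
    ae_restrict_of_ae_restrict_of_subset (fun r hr ↦ hs.trans hr.1.le) hder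
  have invariant (s t : ℝ) (hs : 0 ≤ s) (hst : s ≤ t) : v s ≤ N → v t ≤ N :=
    hlip.le_of_le_of_ae_deriv_nonpos hst <| (hder_on s t hs).mono fun r hr hvr ↦
      (hr hvr).trans (mul_nonpos_of_nonpos_of_nonneg (neg_nonpos.2 hγ.le) (Real.sqrt_nonneg _))
  refine ⟨fun t ht ↦ ?_, invariant⟩
  have ht0 : 0 ≤ t := le_trans (by positivity) ht
  by_contra! hvt
  have habove : ∀ r ∈ Icc 0 t, N < v r := fun r hr ↦
    lt_of_not_ge fun hvr ↦ hvt.not_ge (invariant r t hr.1 hr.2 hvr)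
  have hw_lip : LocallyLipschitzOn (uIcc 0 t) fun r ↦ √(v r - N) :=
    hlip.locallyLipschitzOn_sqrt_sub (by rwa [uIcc_of_le ht0])
  have hv_ac : AbsolutelyContinuousOnInterval v 0 t :=
    hlip.locallyLipschitzOn.absolutelyContinuousOnInterval
  have hw_der :
      ∀ᵐ r ∂volume.restrict (Ioc 0 t), deriv (fun z ↦ √(v z - N)) r ≤ -(γ / 2) := by
    filter_upwards [hder_on 0 t le_rfl, ae_restrict_of_ae hv_ac.ae_differentiableAt,
      ae_restrict_mem measurableSet_Ioc] with r hr hdiff hmem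
    have hvr := habove r (Ioc_subset_Icc_self hmem)
    exact deriv_sqrt_sub_le (hdiff (uIcc_of_le ht0 ▸ Ioc_subset_Icc_self hmem)) hvr (hr hvr)
  have hdecay := hw_lip.absolutelyContinuousOnInterval.sub_le_mul_of_ae_deriv_le ht0 hw_der
  rw [max_eq_left (sub_pos.2 (habove 0 (left_mem_Icc.2 ht0))).le, div_le_iff₀ hγ] at ht
  have hwt : 0 < √(v t - N) := Real.sqrt_pos.2 (sub_pos.2 hvt)
  linarith

theorem stmt_15 (v : ℝ → ℝ) (N γ : ℝ) (hN : 0 ≤ N) (hγ : 0 < γ)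
    (hlip : LocallyLipschitz v)
    (hder : ∀ᵐ t ∂(volume.restrict (Set.Ici (0 : ℝ))),
      N < v t → deriv v t ≤ -γ * Real.sqrt (v t - N)) :
    (∀ t : ℝ, 2 * Real.sqrt (max (v 0 - N) 0) / γ ≤ t → v t ≤ N) ∧
    (∀ s t : ℝ, 0 ≤ s → s ≤ t → v s ≤ N → v t ≤ N) :=
  stmt_15_general v N γ hγ hlip hder
end

section
/- The Lyapunov function V is locally Lipschitz on ℝ²: on every bounded set, V is Lipschitz continuous. -/
lemma ifmax (α a x1 : ℝ) (ha : 0 ≤ a) (hα : 1 ≤ α) :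
    (if x1 ≤ a then 2 * a - x1 else if x1 ≤ (2 * α + 1) * a then a else x1 - 2 * α * a)
      = max (2 * a - x1) (max a (x1 - 2 * α * a)) := by
  split_ifs with h1 h2
  · symm
    rw [max_eq_left]
    apply max_le <;> nlinarith
  · push_neg at h1
    symm
    rw [max_eq_left (show x1 - 2 * α * a ≤ a by nlinarith),
        max_eq_right (show 2 * a - x1 ≤ a by nlinarith)]
  · push_neg at h1 h2
    symm
    rw [max_eq_right (show a ≤ x1 - 2 * α * a by nlinarith),
        max_eq_right (show 2 * a - x1 ≤ x1 - 2 * α * a by nlinarith)]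

lemma Wmax (L lam2 α x1 x2 : ℝ) (hL : 0 < L) (hlam2 : 0 < lam2) (hα1 : 1 < α) :
    W L lam2 α x1 x2 = max (2 * (x2 ^ 2 / (4 * α * (lam2 + 1) * L)) - x1)
      (max (x2 ^ 2 / (4 * α * (lam2 + 1) * L))
        (x1 - 2 * α * (x2 ^ 2 / (4 * α * (lam2 + 1) * L)))) := by
  have hα0 : 0 < α := by linarith
  have hc : 0 < 4 * α * (lam2 + 1) * L := by positivity
  have e1 : x2 ^ 2 / (2 * α * (lam2 + 1) * L) = 2 * (x2 ^ 2 / (4 * α * (lam2 + 1) * L)) := by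
    field_simp
    ring
  have e2 : (2 * α + 1) * x2 ^ 2 / (4 * α * (lam2 + 1) * L)
      = (2 * α + 1) * (x2 ^ 2 / (4 * α * (lam2 + 1) * L)) := by ring
  have e3 : x2 ^ 2 / (2 * (lam2 + 1) * L) = 2 * α * (x2 ^ 2 / (4 * α * (lam2 + 1) * L)) := by
    field_simp
    ring
  unfold W
  rw [e1, e2, e3]
  exact ifmax α _ x1 (by positivity) hα1.le

lemma Wzero (L lam2 α x1 : ℝ) : W L lam2 α x1 0 = |x1| := by
  unfold W
  norm_num
  split_ifs with h
  · exact (abs_of_nonpos h).symm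
  · exact (abs_of_pos (not_le.mp h)).symm

lemma Wneg (L lam2 α x1 x2 : ℝ) : W L lam2 α x1 (-x2) = W L lam2 α x1 x2 := by
  unfold W
  simp only [neg_sq]

lemma Vlow (L lam2 α x1 x2 : ℝ) (hx2 : x2 ≤ 0) :
    V L lam2 α x1 x2 = W L lam2 α (-x1) x2 := by
  unfold V
  split_ifs with h
  · have h0 : x2 = 0 := le_antisymm hx2 h
    subst h0
    rw [Wzero, Wzero, abs_neg]
  · exact Wneg L lam2 α (-x1) x2

lemma est_lem (α b d x1 y1 u v : ℝ) (hα : 1 ≤ α) (hb : 0 ≤ b) (hd : 0 ≤ d)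
    (h1 : |x1 - y1| ≤ d) (h2 : |u - v| ≤ b * d) :
    |max (2 * u - x1) (max u (x1 - 2 * α * u)) - max (2 * v - y1) (max v (y1 - 2 * α * v))|
      ≤ (1 + 2 * α * b) * d := by
  have hα0 : 0 ≤ α := by linarith
  obtain ⟨h1a, h1b⟩ := abs_le.mp h1
  obtain ⟨h2a, h2b⟩ := abs_le.mp h2
  have key := abs_max_sub_max_le_max (2 * u - x1) (max u (x1 - 2 * α * u))
    (2 * v - y1) (max v (y1 - 2 * α * v))
  have key2 := abs_max_sub_max_le_max u (x1 - 2 * α * u) v (y1 - 2 * α * v)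
  refine key.trans (max_le ?_ (key2.trans (max_le ?_ ?_))) <;> rw [abs_le] <;> constructor <;>
    nlinarith [mul_nonneg (mul_nonneg (sub_nonneg.2 hα) hb) hd,
      mul_le_mul_of_nonneg_left h2a hα0, mul_le_mul_of_nonneg_left h2b hα0,
      mul_nonneg hb hd]

lemma glue_lem (f : ℝ × ℝ → ℝ) (s : Set (ℝ × ℝ)) (hconv : Convex ℝ s) (K : ℝ) (hK : 0 ≤ K)
    (h1 : ∀ p ∈ s, ∀ q ∈ s, 0 ≤ p.2 → 0 ≤ q.2 → |f p - f q| ≤ K * dist p q)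
    (h2 : ∀ p ∈ s, ∀ q ∈ s, p.2 ≤ 0 → q.2 ≤ 0 → |f p - f q| ≤ K * dist p q) :
    ∀ p ∈ s, ∀ q ∈ s, |f p - f q| ≤ K * dist p q := by
  have mixed : ∀ p ∈ s, ∀ q ∈ s, 0 ≤ p.2 → q.2 ≤ 0 → |f p - f q| ≤ K * dist p q := by
    intro p hp q hq hp2 hq2
    rcases eq_or_lt_of_le hq2 with hq0 | hq0
    · exact h1 p hp q hq hp2 hq0.ge
    rcases eq_or_lt_of_le hp2 with hp0 | hp0
    · exact h2 p hp q hq hp0.ge hq2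
    set t : ℝ := p.2 / (p.2 - q.2) with ht_def
    have hden : 0 < p.2 - q.2 := by linarith
    have ht0 : 0 ≤ t := le_of_lt (div_pos hp0 hden)
    have ht1 : t ≤ 1 := by rw [ht_def, div_le_one hden]; linarith
    set r : ℝ × ℝ := (1 - t) • p + t • q with hr_def
    have hrs : r ∈ s := hconv hp hq (by linarith) ht0 (by ring)
    have htden : t * (p.2 - q.2) = p.2 := div_mul_cancel₀ p.2 hden.ne'
    have hr2 : r.2 = 0 := by
      simp only [hr_def, Prod.snd_add, Prod.smul_snd, smul_eq_mul]
      linear_combination -htden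
    have e1 : p.1 - r.1 = t * (p.1 - q.1) := by
      simp only [hr_def, Prod.fst_add, Prod.smul_fst, smul_eq_mul]
      ring
    have e2 : p.2 - r.2 = t * (p.2 - q.2) := by
      simp only [hr_def, Prod.snd_add, Prod.smul_snd, smul_eq_mul]
      ring
    have f1 : r.1 - q.1 = (1 - t) * (p.1 - q.1) := by
      simp only [hr_def, Prod.fst_add, Prod.smul_fst, smul_eq_mul]
      ring
    have f2 : r.2 - q.2 = (1 - t) * (p.2 - q.2) := by
      simp only [hr_def, Prod.snd_add, Prod.smul_snd, smul_eq_mul]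
      ring
    have hb1 : |p.1 - q.1| ≤ dist p q := by rw [← Real.dist_eq, Prod.dist_eq]; exact le_max_left _ _
    have hb2 : |p.2 - q.2| ≤ dist p q := by rw [← Real.dist_eq, Prod.dist_eq]; exact le_max_right _ _
    have hpr : dist p r ≤ t * dist p q := by
      rw [Prod.dist_eq]
      apply max_le
      · rw [Real.dist_eq, e1, abs_mul, abs_of_nonneg ht0]
        exact mul_le_mul_of_nonneg_left hb1 ht0
      · rw [Real.dist_eq, e2, abs_mul, abs_of_nonneg ht0]
        exact mul_le_mul_of_nonneg_left hb2 ht0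
    have hrq : dist r q ≤ (1 - t) * dist p q := by
      rw [Prod.dist_eq]
      apply max_le
      · rw [Real.dist_eq, f1, abs_mul, abs_of_nonneg (by linarith)]
        exact mul_le_mul_of_nonneg_left hb1 (by linarith)
      · rw [Real.dist_eq, f2, abs_mul, abs_of_nonneg (by linarith)]
        exact mul_le_mul_of_nonneg_left hb2 (by linarith)
    calc |f p - f q| ≤ |f p - f r| + |f r - f q| := abs_sub_le _ _ _
      _ ≤ K * dist p r + K * dist r q :=
          add_le_add (h1 p hp r hrs hp2 hr2.ge) (h2 r hrs q hq hr2.le hq2)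
      _ ≤ K * (t * dist p q) + K * ((1 - t) * dist p q) :=
          add_le_add (mul_le_mul_of_nonneg_left hpr hK) (mul_le_mul_of_nonneg_left hrq hK)
      _ = K * dist p q := by ring
  intro p hp q hq
  rcases le_total 0 p.2 with hp2 | hp2 <;> rcases le_total 0 q.2 with hq2 | hq2
  · exact h1 p hp q hq hp2 hq2
  · exact mixed p hp q hq hp2 hq2
  · rw [abs_sub_comm, dist_comm]
    exact mixed q hq p hp hq2 hp2
  · exact h2 p hp q hq hp2 hq2

theorem stmt_18 (L lam2 α : ℝ) (hL : 0 < L) (hlam2 : 0 < lam2) (hα1 : 1 < α) (hα4 : α ≤ 4) :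
    LocallyLipschitz (fun p : ℝ × ℝ => V L lam2 α p.1 p.2) ∧
    ∀ s : Set (ℝ × ℝ), Bornology.IsBounded s →
      ∃ K : NNReal, LipschitzOnWith K (fun p : ℝ × ℝ => V L lam2 α p.1 p.2) s := by
  have hα0 : 0 < α := by linarith
  have hc : 0 < 4 * α * (lam2 + 1) * L := by positivity
  have key : ∀ R : ℝ, 0 ≤ R →
      LipschitzOnWith (Real.toNNReal (1 + 2 * α * (2 * R / (4 * α * (lam2 + 1) * L))))
        (fun p : ℝ × ℝ => V L lam2 α p.1 p.2) (Metric.closedBall 0 R) := by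
    intro R hR
    have hb : (0:ℝ) ≤ 2 * R / (4 * α * (lam2 + 1) * L) := by positivity
    have hK0 : (0:ℝ) ≤ 1 + 2 * α * (2 * R / (4 * α * (lam2 + 1) * L)) := by positivity
    rw [lipschitzOnWith_iff_dist_le_mul]
    have hmem : ∀ p ∈ Metric.closedBall (0 : ℝ × ℝ) R, |p.2| ≤ R := by
      intro p hp
      rw [Metric.mem_closedBall, Prod.dist_eq] at hp
      have := le_trans (le_max_right (dist p.1 (0:ℝ×ℝ).1) (dist p.2 (0:ℝ×ℝ).2)) hp
      rw [Real.dist_eq] at this; simpa using this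
    have hcommon : ∀ p ∈ Metric.closedBall (0 : ℝ × ℝ) R, ∀ q ∈ Metric.closedBall (0 : ℝ × ℝ) R,
        |p.1 - q.1| ≤ dist p q ∧
        |p.2 ^ 2 / (4 * α * (lam2 + 1) * L) - q.2 ^ 2 / (4 * α * (lam2 + 1) * L)|
          ≤ (2 * R / (4 * α * (lam2 + 1) * L)) * dist p q := by
      intro p hp q hq
      have hb1 : |p.1 - q.1| ≤ dist p q := by
        rw [← Real.dist_eq, Prod.dist_eq]; exact le_max_left _ _
      have hb2 : |p.2 - q.2| ≤ dist p q := by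
        rw [← Real.dist_eq, Prod.dist_eq]; exact le_max_right _ _
      refine ⟨hb1, ?_⟩
      have habs : |p.2 ^ 2 - q.2 ^ 2| ≤ 2 * R * dist p q := by
        have e : p.2 ^ 2 - q.2 ^ 2 = (p.2 - q.2) * (p.2 + q.2) := by ring
        rw [e, abs_mul]
        have hsum : |p.2 + q.2| ≤ 2 * R :=
          (abs_add_le _ _).trans (by linarith [hmem p hp, hmem q hq])
        calc |p.2 - q.2| * |p.2 + q.2| ≤ dist p q * (2 * R) :=
              mul_le_mul hb2 hsum (abs_nonneg _) dist_nonneg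
          _ = 2 * R * dist p q := by ring
      rw [div_sub_div_same, abs_div, abs_of_pos hc]
      calc |p.2 ^ 2 - q.2 ^ 2| / (4 * α * (lam2 + 1) * L)
          ≤ 2 * R * dist p q / (4 * α * (lam2 + 1) * L) := by gcongr
        _ = 2 * R / (4 * α * (lam2 + 1) * L) * dist p q := by ring
    have hup : ∀ p ∈ Metric.closedBall (0 : ℝ × ℝ) R, ∀ q ∈ Metric.closedBall (0 : ℝ × ℝ) R,
        0 ≤ p.2 → 0 ≤ q.2 → |V L lam2 α p.1 p.2 - V L lam2 α q.1 q.2|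
          ≤ (1 + 2 * α * (2 * R / (4 * α * (lam2 + 1) * L))) * dist p q := by
      intro p hp q hq hp2 hq2
      obtain ⟨hb1, hsq⟩ := hcommon p hp q hq
      have ep : V L lam2 α p.1 p.2 = W L lam2 α p.1 p.2 := by unfold V; rw [if_pos hp2]
      have eq' : V L lam2 α q.1 q.2 = W L lam2 α q.1 q.2 := by unfold V; rw [if_pos hq2]
      rw [ep, eq', Wmax L lam2 α p.1 p.2 hL hlam2 hα1, Wmax L lam2 α q.1 q.2 hL hlam2 hα1]
      exact est_lem α _ _ p.1 q.1 _ _ hα1.le hb dist_nonneg hb1 hsq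
    have hdown : ∀ p ∈ Metric.closedBall (0 : ℝ × ℝ) R, ∀ q ∈ Metric.closedBall (0 : ℝ × ℝ) R,
        p.2 ≤ 0 → q.2 ≤ 0 → |V L lam2 α p.1 p.2 - V L lam2 α q.1 q.2|
          ≤ (1 + 2 * α * (2 * R / (4 * α * (lam2 + 1) * L))) * dist p q := by
      intro p hp q hq hp2 hq2
      obtain ⟨hb1, hsq⟩ := hcommon p hp q hq
      have hb1' : |(-p.1) - (-q.1)| ≤ dist p q := by
        rw [show (-p.1) - (-q.1) = -(p.1 - q.1) by ring, abs_neg]; exact hb1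
      rw [Vlow L lam2 α p.1 p.2 hp2, Vlow L lam2 α q.1 q.2 hq2,
        Wmax L lam2 α (-p.1) p.2 hL hlam2 hα1, Wmax L lam2 α (-q.1) q.2 hL hlam2 hα1]
      exact est_lem α _ _ (-p.1) (-q.1) _ _ hα1.le hb dist_nonneg hb1' hsq
    intro p hp q hq
    rw [Real.coe_toNNReal _ hK0, Real.dist_eq]
    exact glue_lem (fun p : ℝ × ℝ => V L lam2 α p.1 p.2) _ (convex_closedBall _ _) _ hK0
      hup hdown p hp q hq
  constructor
  · intro x
    refine ⟨_, Metric.closedBall 0 (‖x‖ + 1), ?_, key (‖x‖ + 1) (by positivity)⟩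
    exact Metric.closedBall_mem_nhds_of_mem (by rw [Metric.mem_ball, dist_zero_right]; linarith)
  · intro s hs
    obtain ⟨R, hR⟩ := hs.subset_closedBall 0
    exact ⟨_, (key (max R 0) (le_max_right R 0)).mono
      (hR.trans (Metric.closedBall_subset_closedBall (le_max_left R 0)))⟩
end
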